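/- (Half-Scales Lemma) Let Ω⁺ ⊂ ℝ² be a Jordan domain, Ω⁻ = ℝ² \ closure(Ω⁺), and Γ = ∂Ω⁺ = ∂Ω⁻. Fix α ∈ (0,1) and C₀ > 0, and suppose there exists r₀ > 0 such that ε(x,r) ≤ C₀·r^α for all x ∈ Γ and all 0 < r ≤ r₀. Then there exists ρ₀ ≤ r₀ such that for every x₀ ∈ Γ, every 0 < s₀ ≤ ρ₀, and every y ∈ ∂B(x₀,s₀) ∩ Γ the following holds. Let x₁ = (x₀ + y)/2 be the midpoint of the segment from x₀ to y. Then there exists a point z ∈ Γ such that: (i) |x₁ − z| < C₀·s₀^{α/2 + 1}; (ii) |z − x₀| = |z − y| =: s₁ and |s₁ − s₀/2| < C₀²·s₀^{α+1}; (iii) the angle between the line through x₀ and y and the line through x₀ and z is at most C₁·s₀^{α/2}, and the angle between the line through x₀ and y and the line through z and y is at most C₁·s₀^{α/2}, where C₁ = 2C₀ + 2C₀². -/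

import Mathlib

open Set Metric MeasureTheory

noncomputable section

abbrev E2 := EuclideanSpace ℝ (Fin 2)

/-- The point on the circle of center `x` and radius `r` at angle `t`. -/
def circlePt (x : E2) (r t : ℝ) : E2 :=
  x + r • (EuclideanSpace.equiv (Fin 2) ℝ).symm ![Real.cos t, Real.sin t]

/-- `A` is an open arc of the circle `∂B(x,r)`. -/
def IsOpenArc (x : E2) (r : ℝ) (A : Set E2) : Prop :=
  ∃ a b : ℝ, a < b ∧ b - a ≤ 2 * Real.pi ∧ A = circlePt x r '' Set.Ioo a b

/-- The `H¹`-measure of the largest open arc of `∂B(x,r)` contained in `Ω`. -/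
def maxArcMeasure (Ω : Set E2) (x : E2) (r : ℝ) : ℝ :=
  (⨆ A ∈ {A | IsOpenArc x r A ∧ A ⊆ Ω}, μH[1] A).toReal

/-- The Carleson ε-function of the Jordan domain `Ω⁺`, where `Ω⁻ = ℝ² \ closure Ω⁺`. -/
def carlesonEps (Ω : Set E2) (x : E2) (r : ℝ) : ℝ :=
  (1 / r) * max |Real.pi * r - maxArcMeasure Ω x r|
      |Real.pi * r - maxArcMeasure ((closure Ω)ᶜ) x r|

/-- `Γ` is a Jordan curve: the image of a continuous injective map of the unit circle. -/
def IsJordanCurve (Γ : Set E2) : Prop :=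
  ∃ f : Metric.sphere (0 : ℝ × ℝ) 1 → E2,
    Continuous f ∧ Function.Injective f ∧ Set.range f = Γ

/-- A Jordan domain: an open connected set whose boundary is a Jordan curve. -/
def IsJordanDomain (Ω : Set E2) : Prop :=
  IsOpen Ω ∧ IsConnected Ω ∧ IsJordanCurve (frontier Ω)

/-- An affine line in the plane. -/
def IsAffineLine (L : Set E2) : Prop :=
  ∃ p v : E2, v ≠ 0 ∧ L = {y | ∃ t : ℝ, y = p + t • v}

/-- The (smaller) angle between the lines spanned by `u` and `v`, an element of `[0, π/2]`. -/
def lineAngle (u v : E2) : ℝ :=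
  min (InnerProductGeometry.angle u v) (Real.pi - InnerProductGeometry.angle u v)

/-!
The Carleson bound at `w ∈ Γ` and radius `r` yields on `∂B(w, r)` an arc in `Ω⁺` and a disjoint
arc in `Ω⁻`, each of angular length at least `π - β` with `β ≈ C₀ r^α`; every point of `Γ` on
that circle therefore lies in one of the two gaps between them, of total length at most `2β`.

On `∂B(y, s₀)` the point `x₀` lies in a gap, so the apexes of the two equilateral triangles over
`[x₀, y]`, at angles `±π/3` from `x₀`, lie in different arcs. The segment joining them lies on the
perpendicular bisector of `[x₀, y]` and hence meets `Γ` at a point `z`. On `∂B(z, r)`,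
`r = |z - x₀|`, both `x₀` and `y` lie in gaps, so they are nearly antipodal:
`s₀ ≥ 2 r cos (C₀ r^α)`. All the estimates follow from this inequality by trigonometry.
-/

open Real EuclideanGeometry Filter Topology

theorem circlePt_add_int_mul_two_pi (x : E2) (r t : ℝ) (m : ℤ) :
    circlePt x r (t + m * (2 * π)) = circlePt x r t := by
  simp only [circlePt, cos_add_int_mul_two_pi, sin_add_int_mul_two_pi]

theorem dist_circlePt_sq (x : E2) (r t s : ℝ) :
    dist (circlePt x r t) (circlePt x r s) ^ 2 = r ^ 2 * (2 - 2 * cos (t - s)) := by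
  rw [EuclideanSpace.dist_eq, sq_sqrt (by positivity)]
  simp [circlePt, Fin.sum_univ_two, Real.dist_eq, sq_abs, cos_sub]
  nlinarith [sin_sq_add_cos_sq t, sin_sq_add_cos_sq s]

theorem dist_circlePt_center (x : E2) {r : ℝ} (hr : 0 ≤ r) (t : ℝ) :
    dist (circlePt x r t) x = r := by
  rw [circlePt, dist_eq_norm, add_sub_cancel_left, norm_smul, EuclideanSpace.norm_eq]
  simp [Fin.sum_univ_two, abs_of_nonneg hr]

theorem exists_eq_circlePt {p x : E2} {r : ℝ} (h : dist p x = r) : ∃ θ, p = circlePt x r θ := by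
  set z : ℂ := ⟨p 0 - x 0, p 1 - x 1⟩
  have hz : ‖z‖ = r := by
    rw [← h, EuclideanSpace.dist_eq, Complex.norm_eq_sqrt_sq_add_sq]
    simp [Fin.sum_univ_two, Real.dist_eq, sq_abs, z]
  refine ⟨z.arg, ?_⟩
  ext i
  fin_cases i
  · simp [circlePt, ← hz, Complex.norm_mul_cos_arg, z]
  · simp [circlePt, ← hz, Complex.norm_mul_sin_arg, z]

theorem lipschitzWith_circlePt (x : E2) {r : ℝ} (hr : 0 ≤ r) :
    LipschitzWith r.toNNReal (circlePt x r) := by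
  refine LipschitzWith.of_dist_le_mul fun t s => ?_
  rw [Real.coe_toNNReal r hr, Real.dist_eq]
  have hchord : 2 - 2 * cos (t - s) ≤ (t - s) ^ 2 := by
    linarith [one_sub_sq_div_two_le_cos (x := t - s)]
  refine (pow_le_pow_iff_left₀ dist_nonneg (by positivity) two_ne_zero).1 ?_
  rw [dist_circlePt_sq, mul_pow, sq_abs]
  gcongr

theorem hausdorffMeasure_circlePt_image_Ioo_le (x : E2) {r : ℝ} (hr : 0 ≤ r) (a b : ℝ) :
    μH[1] (circlePt x r '' Ioo a b) ≤ ENNReal.ofReal (r * (b - a)) := by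
  refine ((lipschitzWith_circlePt x hr).hausdorffMeasure_image_le zero_le_one _).trans_eq ?_
  rw [hausdorffMeasure_real, Real.volume_Ioo, ENNReal.rpow_one, ENNReal.ofReal_mul hr,
    ENNReal.ofReal_eq_coe_nnreal hr, Real.toNNReal_of_nonneg hr]

theorem exists_arc_subset_of_abs_sub_maxArcMeasure_le {Ω : Set E2} {x : E2} {r ε η : ℝ}
    (hr : 0 < r) (hM : |π * r - maxArcMeasure Ω x r| ≤ ε * r) (hε : ε < π) (hη : 0 < η) :
    ∃ a b, a < b ∧ π - ε - η < b - a ∧ circlePt x r '' Ioo a b ⊆ Ω := by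
  have hlt : ENNReal.ofReal (r * (π - ε - η)) < ⨆ A ∈ {A | IsOpenArc x r A ∧ A ⊆ Ω}, μH[1] A := by
    refine lt_of_lt_of_le ?_ (ENNReal.ofReal_le_of_le_toReal (a := π * r - ε * r) ?_)
    · rw [ENNReal.ofReal_lt_ofReal_iff (by nlinarith)]
      nlinarith
    · have hM' := (abs_le.mp hM).2
      rw [maxArcMeasure] at hM'
      linarith
  simp only [lt_iSup_iff] at hlt
  obtain ⟨_, ⟨⟨a, b, hab, -, rfl⟩, hsub⟩, hlt⟩ := hlt
  have hlen := (ENNReal.ofReal_lt_ofReal_iff'.1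
    (hlt.trans_le (hausdorffMeasure_circlePt_image_Ioo_le x hr.le a b))).1
  exact ⟨a, b, hab, lt_of_mul_lt_mul_left hlen hr.le, hsub⟩

def InArc (a b θ : ℝ) : Prop :=
  ∃ m : ℤ, θ + m * (2 * π) ∈ Ioo a b

theorem circlePt_mem_image_of_inArc (x : E2) (r : ℝ) {a b θ : ℝ} (h : InArc a b θ) :
    circlePt x r θ ∈ circlePt x r '' Ioo a b :=
  let ⟨m, hm⟩ := h
  ⟨_, hm, circlePt_add_int_mul_two_pi x r θ m⟩

theorem exists_add_int_mul_two_pi_mem_Ico (θ c : ℝ) :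
    ∃ m : ℤ, θ + m * (2 * π) ∈ Ico c (c + 2 * π) := by
  obtain ⟨m, hm, -⟩ := existsUnique_add_zsmul_mem_Ico two_pi_pos θ c
  exact ⟨m, by simpa only [zsmul_eq_mul] using hm⟩

theorem exists_shift_of_disjoint_inArc {a₁ b₁ a₂ b₂ : ℝ} (h₁ : a₁ < b₁) (h₂ : a₂ < b₂)
    (hdisj : ∀ θ, InArc a₁ b₁ θ → ¬InArc a₂ b₂ θ) :
    ∃ m : ℤ, b₁ ≤ a₂ + m * (2 * π) ∧ b₂ + m * (2 * π) ≤ a₁ + 2 * π := by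
  obtain ⟨m, hm₁, hm₂⟩ := exists_add_int_mul_two_pi_mem_Ico a₂ b₁
  refine ⟨m, hm₁, ?_⟩
  by_contra! hlt
  obtain ⟨t, ht⟩ :
      (Ioo a₁ b₁ ∩ Ioo (a₂ + (m - 1) * (2 * π)) (b₂ + (m - 1) * (2 * π))).Nonempty := by
    rw [Ioo_inter_Ioo, nonempty_Ioo]
    exact max_lt (lt_min h₁ (by linarith)) (lt_min (by linarith) (by linarith))
  refine hdisj t ⟨0, by simpa using ht.1⟩ ⟨1 - m, ?_⟩
  obtain ⟨h₃, h₄⟩ := ht.2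
  constructor <;> push_cast <;> linarith

/-- The arcs `(a, b)` and `(A, B)` of `ℝ ⧸ 2πℤ` are disjoint, met in this order, and each of length
at least `π - β`, so the gaps `[b, A]` and `[B, a + 2π]` between them have total length at most
`2β`. -/
def IsWideArcPair (β a b A B : ℝ) : Prop :=
  b ≤ A ∧ B ≤ a + 2 * π ∧ π - β ≤ b - a ∧ π - β ≤ B - A

theorem exists_add_int_mul_two_pi_mem_gap {a b A B θ : ℝ} (h₁ : ¬InArc a b θ)
    (h₂ : ¬InArc A B θ) : ∃ m : ℤ, θ + m * (2 * π) ∈ Icc b A ∪ Icc B (a + 2 * π) := by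
  obtain ⟨m, hm₁, hm₂⟩ := exists_add_int_mul_two_pi_mem_Ico θ b
  refine ⟨m, ?_⟩
  by_contra! hc
  simp only [mem_union, mem_Icc, not_or, not_and, not_le] at hc
  rcases lt_or_ge (θ + m * (2 * π)) B with hB | hB
  · exact h₂ ⟨m, hc.1 hm₁, hB⟩
  · exact h₁ ⟨m - 1, by push_cast; constructor <;> linarith [hc.2 hB]⟩

theorem IsWideArcPair.exists_abs_sub_int_mul_pi_le {β a b A B θ₁ θ₂ : ℝ}
    (h : IsWideArcPair β a b A B) (h₁ : ¬InArc a b θ₁) (h₁' : ¬InArc A B θ₁)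
    (h₂ : ¬InArc a b θ₂) (h₂' : ¬InArc A B θ₂) : ∃ m : ℤ, |θ₁ - θ₂ - m * π| ≤ 2 * β := by
  obtain ⟨hbA, hBa, hab, hAB⟩ := h
  obtain ⟨m₁, hm₁⟩ := exists_add_int_mul_two_pi_mem_gap h₁ h₁'
  obtain ⟨m₂, hm₂⟩ := exists_add_int_mul_two_pi_mem_gap h₂ h₂'
  rcases hm₁ with ⟨h₁l, h₁u⟩ | ⟨h₁l, h₁u⟩ <;> rcases hm₂ with ⟨h₂l, h₂u⟩ | ⟨h₂l, h₂u⟩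
  · exact ⟨2 * (m₂ - m₁), by push_cast; rw [abs_le]; constructor <;> linarith⟩
  · exact ⟨2 * (m₂ - m₁) - 1, by push_cast; rw [abs_le]; constructor <;> linarith⟩
  · exact ⟨2 * (m₂ - m₁) + 1, by push_cast; rw [abs_le]; constructor <;> linarith⟩
  · exact ⟨2 * (m₂ - m₁), by push_cast; rw [abs_le]; constructor <;> linarith⟩

theorem IsWideArcPair.inArc_add_and_inArc_sub {β a b A B θ δ : ℝ}
    (h : IsWideArcPair β a b A B) (h₁ : ¬InArc a b θ) (h₂ : ¬InArc A B θ)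
    (hδ : 2 * β < δ) (hδ' : δ < π - β) :
    InArc A B (θ + δ) ∧ InArc a b (θ - δ) ∨ InArc a b (θ + δ) ∧ InArc A B (θ - δ) := by
  obtain ⟨hbA, hBa, hab, hAB⟩ := h
  obtain ⟨m, ⟨hl, hu⟩ | ⟨hl, hu⟩⟩ := exists_add_int_mul_two_pi_mem_gap h₁ h₂
  · exact .inl ⟨⟨m, by constructor <;> linarith⟩, ⟨m, by constructor <;> linarith⟩⟩
  · exact .inr ⟨⟨m - 1, by push_cast; constructor <;> linarith⟩,
      ⟨m, by constructor <;> linarith⟩⟩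

theorem exists_isWideArcPair_of_carlesonEps_le {Ω : Set E2} {x : E2} {r ε η : ℝ} (hr : 0 < r)
    (hε : carlesonEps Ω x r ≤ ε) (hεπ : ε < π) (hη : 0 < η) :
    ∃ a b A B, IsWideArcPair (ε + η) a b A B ∧ (∀ θ, InArc a b θ → circlePt x r θ ∈ Ω) ∧
      ∀ θ, InArc A B θ → circlePt x r θ ∉ closure Ω := by
  rw [carlesonEps, one_div, inv_mul_le_iff₀ hr, mul_comm r] at hε
  obtain ⟨a, b, hab, hlen, hsub⟩ :=
    exists_arc_subset_of_abs_sub_maxArcMeasure_le hr ((le_max_left _ _).trans hε) hεπ hη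
  obtain ⟨a', b', hab', hlen', hsub'⟩ :=
    exists_arc_subset_of_abs_sub_maxArcMeasure_le hr ((le_max_right _ _).trans hε) hεπ hη
  have hin : ∀ θ, InArc a b θ → circlePt x r θ ∈ Ω := fun θ hθ ↦
    hsub (circlePt_mem_image_of_inArc x r hθ)
  have hout : ∀ θ, InArc a' b' θ → circlePt x r θ ∉ closure Ω := fun θ hθ ↦
    hsub' (circlePt_mem_image_of_inArc x r hθ)
  obtain ⟨m, hbA, hBa⟩ := exists_shift_of_disjoint_inArc hab hab'
    fun θ hθ hθ' ↦ hout θ hθ' (subset_closure (hin θ hθ))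
  refine ⟨a, b, a' + m * (2 * π), b' + m * (2 * π), ⟨hbA, hBa, by linarith, by linarith⟩, hin,
    fun θ ⟨k, hk⟩ ↦ hout θ ⟨k - m, ?_⟩⟩
  obtain ⟨hk₁, hk₂⟩ := hk
  push_cast
  constructor <;> linarith

theorem not_inArc_of_circlePt_mem_frontier {Ω : Set E2} (hΩ : IsOpen Ω) {x : E2} {r a b A B θ : ℝ}
    (hin : ∀ θ, InArc a b θ → circlePt x r θ ∈ Ω)
    (hout : ∀ θ, InArc A B θ → circlePt x r θ ∉ closure Ω)
    (hθ : circlePt x r θ ∈ frontier Ω) : ¬InArc a b θ ∧ ¬InArc A B θ :=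
  ⟨fun h ↦ hΩ.inter_frontier_eq.subset ⟨hin θ h, hθ⟩, fun h ↦ hout θ h hθ.1⟩

theorem IsPreconnected.inter_frontier_nonempty {X : Type*} [TopologicalSpace X] {s t : Set X}
    (hs : IsPreconnected s) (hst : (s ∩ t).Nonempty) (hst' : (s \ t).Nonempty) :
    (s ∩ frontier t).Nonempty := by
  by_contra! h
  have hsub : s ⊆ interior t ∪ (closure t)ᶜ := fun w hw ↦
    (em (w ∈ interior t)).elim .inl fun hi ↦ .inr fun hc ↦ h.subset ⟨hw, hc, hi⟩
  rcases hs.subset_or_subset isOpen_interior isClosed_closure.isOpen_compl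
    (disjoint_compl_right.mono_left interior_subset_closure) hsub with hs' | hs'
  · obtain ⟨w, hws, hwt⟩ := hst'
    exact hwt (interior_subset (hs' hws))
  · obtain ⟨w, hws, hwt⟩ := hst
    exact hs' hws (subset_closure hwt)

theorem exists_mem_frontier_dist_eq_of_carlesonEps_le {Ω : Set E2} (hΩ : IsOpen Ω) {x₀ y : E2}
    (hx₀ : x₀ ∈ frontier Ω) (hs : 0 < dist x₀ y) {ε : ℝ}
    (hε : carlesonEps Ω y (dist x₀ y) ≤ ε) (hε6 : ε < π / 6) :
    ∃ z ∈ frontier Ω, dist z x₀ = dist z y ∧ dist z y ≤ dist x₀ y := by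
  set s := dist x₀ y
  obtain ⟨a, b, A, B, harcs, hin, hout⟩ := exists_isWideArcPair_of_carlesonEps_le
    (η := (π / 6 - ε) / 2) hs hε (by linarith [pi_pos]) (by linarith)
  obtain ⟨τ, hτ⟩ := exists_eq_circlePt (rfl : dist x₀ y = s)
  obtain ⟨hτ₁, hτ₂⟩ := not_inArc_of_circlePt_mem_frontier hΩ hin hout (hτ ▸ hx₀)
  have hapex : ∀ δ, cos δ = 1 / 2 →
      circlePt y s (τ + δ) ∈ (AffineSubspace.perpBisector x₀ y : Set E2) ∩ closedBall y s := by
    intro δ hδ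
    have hdy := dist_circlePt_center y hs.le (τ + δ)
    refine ⟨AffineSubspace.mem_perpBisector_iff_dist_eq.2 ?_, hdy.le⟩
    rw [hdy, ← sq_eq_sq₀ dist_nonneg hs.le, hτ, dist_circlePt_sq, add_sub_cancel_left, hδ]
    ring
  set kp := circlePt y s (τ + π / 3)
  set km := circlePt y s (τ - π / 3)
  have hseg : segment ℝ km kp ⊆ (AffineSubspace.perpBisector x₀ y : Set E2) ∩ closedBall y s :=
    ((AffineSubspace.perpBisector x₀ y).convex.inter (convex_closedBall y s)).segment_subset
      (by simpa only [km, sub_eq_add_neg] using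
        hapex (-(π / 3)) (by rw [cos_neg, cos_pi_div_three]))
      (hapex (π / 3) cos_pi_div_three)
  have hcross : (segment ℝ km kp ∩ Ω).Nonempty ∧ (segment ℝ km kp \ Ω).Nonempty := by
    rcases harcs.inArc_add_and_inArc_sub hτ₁ hτ₂ (δ := π / 3) (by linarith) (by linarith [pi_pos])
      with ⟨hp, hm⟩ | ⟨hp, hm⟩
    · exact ⟨⟨km, left_mem_segment _ _ _, hin _ hm⟩,
        ⟨kp, right_mem_segment _ _ _, fun h ↦ hout _ hp (subset_closure h)⟩⟩
    · exact ⟨⟨kp, right_mem_segment _ _ _, hin _ hp⟩,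
        ⟨km, left_mem_segment _ _ _, fun h ↦ hout _ hm (subset_closure h)⟩⟩
  obtain ⟨z, hzseg, hzΓ⟩ :=
    (convex_segment km kp).isPreconnected.inter_frontier_nonempty hcross.1 hcross.2
  exact ⟨z, hzΓ, AffineSubspace.mem_perpBisector_iff_dist_eq.1 (hseg hzseg).1, (hseg hzseg).2⟩

theorem two_mul_mul_cos_le_of_abs_sub_int_mul_pi_le {r s β d : ℝ} {m : ℤ} (hr : 0 < r)
    (hrs : r ≤ s) (hβ : β < π / 6) (hs : s ^ 2 = r ^ 2 * (2 - 2 * cos d))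
    (hm : |d - m * π| ≤ 2 * β) : 2 * r * cos β ≤ s := by
  set e := d - m * π
  have he : 0 ≤ |e| := abs_nonneg e
  have hcos : cos (2 * β) ≤ cos e := by
    rw [← cos_abs e]
    exact cos_le_cos_of_nonneg_of_le_pi he (by linarith [pi_pos]) hm
  obtain ⟨n, rfl | rfl⟩ := Int.even_or_odd' m
  · have hd : cos d = cos e := by
      rw [show d = e + n * (2 * π) by push_cast [e]; ring, cos_add_int_mul_two_pi]
    -- the chord would be shorter than the radius
    have hhalf : 1 / 2 < cos (2 * β) := by
      rw [← cos_pi_div_three]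
      exact cos_lt_cos_of_nonneg_of_le_pi (by linarith) (by linarith [pi_pos]) (by linarith)
    nlinarith [mul_pos (pow_pos hr 2) (sub_pos.2 (hhalf.trans_le hcos)),
      pow_le_pow_left₀ hr.le hrs 2]
  · have hd : cos d = -cos e := by
      rw [show d = e + π + n * (2 * π) by push_cast [e]; ring, cos_add_int_mul_two_pi, cos_add_pi]
    have hβ₀ : 0 ≤ cos β := cos_nonneg_of_mem_Icc ⟨by linarith [pi_pos], by linarith [pi_pos]⟩
    refine (pow_le_pow_iff_left₀ (by positivity) (by linarith) two_ne_zero).1 ?_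
    rw [hs, hd]
    nlinarith [cos_two_mul β, mul_le_mul_of_nonneg_left hcos (sq_nonneg r)]

theorem two_mul_mul_cos_le_dist_of_carlesonEps_le {Ω : Set E2} (hΩ : IsOpen Ω) {p q z : E2}
    (hp : p ∈ frontier Ω) (hq : q ∈ frontier Ω) {r ε : ℝ} (hpz : dist p z = r)
    (hqz : dist q z = r) (hr : 0 < r) (hrpq : r ≤ dist p q) (hε : carlesonEps Ω z r ≤ ε)
    (hε6 : ε < π / 6) : 2 * r * cos ε ≤ dist p q := by
  have hη : ∀ η ∈ Ioo 0 (π / 6 - ε), 2 * r * cos (ε + η) ≤ dist p q := by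
    rintro η ⟨hη, hη'⟩
    obtain ⟨a, b, A, B, harcs, hin, hout⟩ :=
      exists_isWideArcPair_of_carlesonEps_le hr hε (by linarith [pi_pos]) hη
    obtain ⟨θ₁, rfl⟩ := exists_eq_circlePt hpz
    obtain ⟨θ₂, rfl⟩ := exists_eq_circlePt hqz
    obtain ⟨h₁, h₁'⟩ := not_inArc_of_circlePt_mem_frontier hΩ hin hout hp
    obtain ⟨h₂, h₂'⟩ := not_inArc_of_circlePt_mem_frontier hΩ hin hout hq
    obtain ⟨m, hm⟩ := harcs.exists_abs_sub_int_mul_pi_le h₁ h₁' h₂ h₂'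
    exact two_mul_mul_cos_le_of_abs_sub_int_mul_pi_le hr hrpq (by linarith)
      (dist_circlePt_sq z r θ₁ θ₂) hm
  refine le_of_tendsto (x := 𝓝[>] 0) ?_ (eventually_of_mem (Ioo_mem_nhdsGT (by linarith)) hη)
  have hcont : Continuous fun η ↦ 2 * r * cos (ε + η) := by fun_prop
  simpa using (hcont.tendsto 0).mono_left nhdsWithin_le_nhds

theorem angle_le_of_two_mul_mul_cos_le {p q z : E2} {r X : ℝ} (hpz : dist z p = r)
    (hqz : dist z q = r) (hpq : 0 < dist p q) (hX : X ∈ Icc 0 π)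
    (h : 2 * r * cos X ≤ dist p q) : ∠ q p z ≤ X := by
  have hr : 0 < r := by linarith [dist_triangle p z q, dist_comm p z]
  have hlaw := law_cos q p z
  rw [dist_comm q z, hqz, hpz, dist_comm q p] at hlaw
  have hcos : 2 * r * cos (∠ q p z) = dist p q :=
    mul_left_cancel₀ hpq.ne' (by linarith)
  refine (strictAntiOn_cos.le_iff_ge hX ⟨angle_nonneg _ _ _, angle_le_pi _ _ _⟩).1 ?_
  exact le_of_mul_le_mul_left (hcos ▸ h) (by positivity)

theorem sub_half_le_of_two_mul_mul_cos_le {r s X : ℝ} (hr : 0 ≤ r) (hrs : r ≤ s)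
    (h : 2 * r * cos X ≤ s) : r - s / 2 ≤ s / 2 * X ^ 2 := by
  nlinarith [one_sub_sq_div_two_le_cos (x := X), mul_le_mul_of_nonneg_right hrs (sq_nonneg X)]

theorem abs_sub_half_lt_and_dist_midpoint_sq_lt {x₀ y z : E2} {r X L : ℝ}
    (hzx : dist z x₀ = r) (hzy : dist z y = r) (hs : 0 < dist x₀ y) (hrs : r ≤ dist x₀ y)
    (hcos : 2 * r * cos X ≤ dist x₀ y) (hL : 0 < L) (hXL : X ^ 2 ≤ L) :
    |r - dist x₀ y / 2| < L * dist x₀ y ∧ dist (midpoint ℝ x₀ y) z ^ 2 < L * dist x₀ y ^ 2 := by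
  set s := dist x₀ y
  have hr : s / 2 ≤ r := by linarith [dist_triangle x₀ z y, dist_comm x₀ z]
  have hgap : r - s / 2 ≤ s / 2 * L :=
    (sub_half_le_of_two_mul_mul_cos_le (by linarith) hrs hcos).trans (by gcongr)
  have hmid : dist (midpoint ℝ x₀ y) z ^ 2 = (r - s / 2) * (r + s / 2) := by
    have := dist_sq_add_dist_sq_eq_two_mul_dist_midpoint_sq_add_half_dist_sq z x₀ y
    rw [hzx, hzy, dist_comm z] at this
    linarith
  refine ⟨by rw [abs_of_nonneg (by linarith)]; nlinarith, ?_⟩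
  rw [hmid]
  nlinarith [mul_le_mul hgap (show r + s / 2 ≤ 3 / 2 * s by linarith) (by linarith)
    (by positivity), mul_pos hL (pow_pos hs 2)]

theorem exists_pos_mul_rpow_lt {α C c r₀ : ℝ} (hα : 0 < α) (hC : 0 < C) (hc : 0 < c)
    (hr₀ : 0 < r₀) : ∃ ρ, 0 < ρ ∧ ρ ≤ r₀ ∧ ρ ≤ 1 ∧ C * ρ ^ α < c := by
  refine ⟨min (min r₀ 1) ((c / (2 * C)) ^ α⁻¹), by positivity,
    (min_le_left _ _).trans (min_le_left _ _), (min_le_left _ _).trans (min_le_right _ _), ?_⟩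
  calc C * min (min r₀ 1) ((c / (2 * C)) ^ α⁻¹) ^ α ≤ C * ((c / (2 * C)) ^ α⁻¹) ^ α := by
        gcongr
        exact min_le_right _ _
    _ = c / 2 := by
        rw [rpow_inv_rpow (by positivity) hα.ne']
        field_simp
    _ < c := half_lt_self hc

theorem half_scale_estimates {x₀ y z : E2} {α C₀ s₀ : ℝ} (hα : 0 < α) (hC₀ : 0 < C₀)
    (hy : dist x₀ y = s₀) (hs₀ : 0 < s₀) (hs₀1 : s₀ ≤ 1) (hsmall : C₀ * s₀ ^ α ≤ π)
    (hzx : dist z x₀ = dist z y) (hzy : dist z y ≤ s₀)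
    (hcos : 2 * dist z y * cos (C₀ * dist z y ^ α) ≤ s₀) :
    dist (midpoint ℝ x₀ y) z < C₀ * s₀ ^ (α / 2 + 1) ∧
      dist z x₀ = dist z y ∧
      |dist z x₀ - s₀ / 2| < C₀ ^ 2 * s₀ ^ (α + 1) ∧
      lineAngle (y - x₀) (z - x₀) ≤ (2 * C₀ + 2 * C₀ ^ 2) * s₀ ^ (α / 2) ∧
      lineAngle (y - x₀) (y - z) ≤ (2 * C₀ + 2 * C₀ ^ 2) * s₀ ^ (α / 2) := by
  subst hy
  set s₀ := dist x₀ y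
  set r := dist z y
  have hr : 0 < r := by linarith [dist_triangle x₀ z y, dist_comm x₀ z]
  have hX : C₀ * r ^ α ≤ C₀ * s₀ ^ α :=
    mul_le_mul_of_nonneg_left (rpow_le_rpow hr.le hzy hα.le) hC₀.le
  have hXL : (C₀ * r ^ α) ^ 2 ≤ C₀ ^ 2 * s₀ ^ α := calc
    (C₀ * r ^ α) ^ 2 ≤ (C₀ * s₀ ^ α) ^ 2 := pow_le_pow_left₀ (by positivity) hX 2
    _ = C₀ ^ 2 * s₀ ^ α * s₀ ^ α := by ring
    _ ≤ C₀ ^ 2 * s₀ ^ α := mul_le_of_le_one_right (by positivity) (rpow_le_one hs₀.le hs₀1 hα.le)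
  obtain ⟨hsub, hmid⟩ :=
    abs_sub_half_lt_and_dist_midpoint_sq_lt hzx rfl hs₀ hzy hcos (by positivity) hXL
  have hangle : C₀ * r ^ α ≤ (2 * C₀ + 2 * C₀ ^ 2) * s₀ ^ (α / 2) := calc
    C₀ * r ^ α ≤ C₀ * s₀ ^ α := hX
    _ ≤ C₀ * s₀ ^ (α / 2) := mul_le_mul_of_nonneg_left
      (rpow_le_rpow_of_exponent_ge hs₀ hs₀1 (by linarith)) hC₀.le
    _ ≤ (2 * C₀ + 2 * C₀ ^ 2) * s₀ ^ (α / 2) :=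
      mul_le_mul_of_nonneg_right (by nlinarith) (by positivity)
  have hXπ : C₀ * r ^ α ∈ Icc 0 π := ⟨by positivity, hX.trans hsmall⟩
  refine ⟨?_, hzx, ?_, ?_, ?_⟩
  · have hsq : (C₀ * s₀ ^ (α / 2 + 1)) ^ 2 = C₀ ^ 2 * s₀ ^ α * s₀ ^ 2 := by
      rw [rpow_add_one hs₀.ne', mul_pow, mul_pow, ← rpow_mul_natCast hs₀.le]
      norm_num
      ring
    exact lt_of_pow_lt_pow_left₀ 2 (by positivity) (hsq ▸ hmid)
  · rwa [hzx, rpow_add_one hs₀.ne', ← mul_assoc]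
  · exact (min_le_left _ _).trans <|
      (angle_le_of_two_mul_mul_cos_le hzx rfl hs₀ hXπ hcos).trans hangle
  · refine (min_le_left _ _).trans <| le_of_eq_of_le ?_ <|
      (angle_le_of_two_mul_mul_cos_le rfl hzx (dist_comm x₀ y ▸ hs₀) hXπ
        (dist_comm x₀ y ▸ hcos)).trans hangle
    rw [← InnerProductGeometry.angle_neg_neg, neg_sub, neg_sub]
    rfl

theorem half_scales_general (Ωp : Set E2) (hΩ : IsJordanDomain Ωp)
    (Γ : Set E2) (hΓp : Γ = frontier Ωp)
    (α C₀ : ℝ) (hα : α ∈ Set.Ioo (0 : ℝ) 1) (hC₀ : 0 < C₀)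
    (r₀ : ℝ) (hr₀ : 0 < r₀)
    (hε : ∀ x ∈ Γ, ∀ r : ℝ, 0 < r → r ≤ r₀ → carlesonEps Ωp x r ≤ C₀ * r ^ α) :
    ∃ ρ₀ : ℝ, 0 < ρ₀ ∧ ρ₀ ≤ r₀ ∧
      ∀ x₀ ∈ Γ, ∀ s₀ : ℝ, 0 < s₀ → s₀ ≤ ρ₀ →
        ∀ y ∈ Metric.sphere x₀ s₀ ∩ Γ,
          ∃ z ∈ Γ,
            dist (midpoint ℝ x₀ y) z < C₀ * s₀ ^ (α / 2 + 1) ∧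
            dist z x₀ = dist z y ∧
            |dist z x₀ - s₀ / 2| < C₀ ^ 2 * s₀ ^ (α + 1) ∧
            lineAngle (y - x₀) (z - x₀) ≤ (2 * C₀ + 2 * C₀ ^ 2) * s₀ ^ (α / 2) ∧
            lineAngle (y - x₀) (y - z) ≤ (2 * C₀ + 2 * C₀ ^ 2) * s₀ ^ (α / 2) := by
  subst hΓp
  obtain ⟨ρ₀, hρ₀, hρ₀r₀, hρ₀1, hsmall⟩ :=
    exists_pos_mul_rpow_lt (c := π / 6) hα.1 hC₀ (by positivity) hr₀
  refine ⟨ρ₀, hρ₀, hρ₀r₀, fun x₀ hx₀ s₀ hs₀ hs₀ρ₀ y ⟨hy, hyΓ⟩ ↦ ?_⟩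
  rw [Metric.mem_sphere, dist_comm] at hy
  subst hy
  have hs₀small : C₀ * dist x₀ y ^ α < π / 6 :=
    (mul_le_mul_of_nonneg_left (rpow_le_rpow hs₀.le hs₀ρ₀ hα.1.le) hC₀.le).trans_lt hsmall
  obtain ⟨z, hzΓ, hzx, hzy⟩ := exists_mem_frontier_dist_eq_of_carlesonEps_le hΩ.1 hx₀ hs₀
    (hε y hyΓ _ hs₀ (hs₀ρ₀.trans hρ₀r₀)) hs₀small
  have hr : 0 < dist z y := by linarith [dist_triangle x₀ z y, dist_comm x₀ z]
  have hεz : C₀ * dist z y ^ α < π / 6 :=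
    (mul_le_mul_of_nonneg_left (rpow_le_rpow hr.le hzy hα.1.le) hC₀.le).trans_lt hs₀small
  have hcos := two_mul_mul_cos_le_dist_of_carlesonEps_le hΩ.1 hx₀ hyΓ
    ((dist_comm x₀ z).trans hzx) (dist_comm y z) hr hzy
    (hε z hzΓ _ hr (hzy.trans (hs₀ρ₀.trans hρ₀r₀))) hεz
  exact ⟨z, hzΓ, half_scale_estimates hα.1 hC₀ rfl hs₀ (hs₀ρ₀.trans hρ₀1)
    (by linarith [pi_pos]) hzx hzy hcos⟩

/-- Half-Scales Lemma: for `x₀ ∈ Γ`, small `s₀` and `y ∈ ∂B(x₀,s₀) ∩ Γ`, there is `z ∈ Γ`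
within `C₀ s₀^{α/2+1}` of the midpoint of `[x₀,y]`, equidistant from `x₀` and `y` with this
common distance `s₁` satisfying `|s₁ - s₀/2| < C₀² s₀^{α+1}`, and with the lines `(x₀,z)` and
`(z,y)` making angle at most `C₁ s₀^{α/2}` with the line `(x₀,y)`, where `C₁ = 2C₀ + 2C₀²`. -/
theorem half_scales (Ωp : Set E2) (hΩ : IsJordanDomain Ωp)
    (Ωm : Set E2) (hΩm : Ωm = (closure Ωp)ᶜ)
    (Γ : Set E2) (hΓp : Γ = frontier Ωp) (hΓm : Γ = frontier Ωm)
    (α C₀ : ℝ) (hα : α ∈ Set.Ioo (0 : ℝ) 1) (hC₀ : 0 < C₀)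
    (r₀ : ℝ) (hr₀ : 0 < r₀)
    (hε : ∀ x ∈ Γ, ∀ r : ℝ, 0 < r → r ≤ r₀ → carlesonEps Ωp x r ≤ C₀ * r ^ α) :
    ∃ ρ₀ : ℝ, 0 < ρ₀ ∧ ρ₀ ≤ r₀ ∧
      ∀ x₀ ∈ Γ, ∀ s₀ : ℝ, 0 < s₀ → s₀ ≤ ρ₀ →
        ∀ y ∈ Metric.sphere x₀ s₀ ∩ Γ,
          ∃ z ∈ Γ,
            dist (midpoint ℝ x₀ y) z < C₀ * s₀ ^ (α / 2 + 1) ∧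
            dist z x₀ = dist z y ∧
            |dist z x₀ - s₀ / 2| < C₀ ^ 2 * s₀ ^ (α + 1) ∧
            lineAngle (y - x₀) (z - x₀) ≤ (2 * C₀ + 2 * C₀ ^ 2) * s₀ ^ (α / 2) ∧
            lineAngle (y - x₀) (y - z) ≤ (2 * C₀ + 2 * C₀ ^ 2) * s₀ ^ (α / 2) :=
  half_scales_general Ωp hΩ Γ hΓp α C₀ hα hC₀ r₀ hr₀ hε

end
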